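/- Let A, C be disjoint nonempty subsets of [n] and S := [n] ∖ (A ∪ C). The critical cubes in the support of ρ_{A,C} are as follows: (1) if |A| ≥ 2, the support of ρ_{A,C} contains no critical cubes; (2) if A = {a} and |C| ≥ 2, the support contains no critical cubes unless a > c for all c ∈ C, in which case it contains the unique critical cube ({a}, ∅, C, S); (3) if A = {a}, C = {c} and c − a ≤ 1, the support contains the unique critical cube ({a}, ∅, {c}, S); (4) if A = {a}, C = {c} and c − a ≥ 2, the critical cubes in the support are exactly the cubes ({a}, T, {c}, S ∖ T) for those T ⊆ S with either T = ∅ or a < t < c for all t ∈ T. -/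

import Mathlib

/-- A (potential) cube of the cubical complex `Ω_n`: an ordered 4-tuple of finite
subsets of `ℕ`. -/
structure Cube where
  A : Finset ℕ
  B : Finset ℕ
  C : Finset ℕ
  D : Finset ℕ
deriving DecidableEq

/-- `σ` is a cube of `Ω_n`: the four parts are pairwise disjoint, their union is
`[n] = {1,…,n}`, and `A`, `C` are nonempty. -/
def IsCube (n : ℕ) (σ : Cube) : Prop :=
  Disjoint σ.A σ.B ∧ Disjoint σ.A σ.C ∧ Disjoint σ.A σ.D ∧
  Disjoint σ.B σ.C ∧ Disjoint σ.B σ.D ∧ Disjoint σ.C σ.D ∧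
  σ.A ∪ σ.B ∪ σ.C ∪ σ.D = Finset.Icc 1 n ∧
  σ.A.Nonempty ∧ σ.C.Nonempty

/-- The dimension of a cube, `|B| + |D|`. -/
def Cube.dim (σ : Cube) : ℕ := σ.B.card + σ.D.card

/-- The pivot `α(σ) = min (A ∪ B)`. -/
noncomputable def Cube.alpha (σ : Cube) : ℕ := sInf (↑(σ.A ∪ σ.B) : Set ℕ)

/-- The pivot `β(σ) = max (B ∪ C)`. -/
noncomputable def Cube.beta (σ : Cube) : ℕ := sSup (↑(σ.B ∪ σ.C) : Set ℕ)

def M1up (σ : Cube) : Prop := σ.alpha ∈ σ.B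
def M1down (σ : Cube) : Prop := σ.alpha ∈ σ.A ∧ 2 ≤ σ.A.card
def M2up (σ : Cube) : Prop := σ.A = {σ.alpha} ∧ σ.beta ∈ σ.B
def M2down (σ : Cube) : Prop :=
  σ.A = {σ.alpha} ∧ σ.beta ∈ σ.C ∧ 2 ≤ σ.C.card ∧ σ.alpha < σ.beta
def Mdown (σ : Cube) : Prop := M1down σ ∨ M2down σ
def Mup (σ : Cube) : Prop := M1up σ ∨ M2up σ
def Critical (σ : Cube) : Prop := ¬ Mdown σ ∧ ¬ Mup σ

/-- The covering relation: `τ` is obtained from `σ` by moving exactly one element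
of `B(σ) ∪ D(σ)` into `A(σ)` or into `C(σ)`. -/
def Covers (σ τ : Cube) : Prop :=
  (∃ x ∈ σ.B, τ = ⟨insert x σ.A, σ.B.erase x, σ.C, σ.D⟩) ∨
  (∃ x ∈ σ.B, τ = ⟨σ.A, σ.B.erase x, insert x σ.C, σ.D⟩) ∨
  (∃ x ∈ σ.D, τ = ⟨insert x σ.A, σ.B, σ.C, σ.D.erase x⟩) ∨
  (∃ x ∈ σ.D, τ = ⟨σ.A, σ.B, insert x σ.C, σ.D.erase x⟩)

open Classical in
/-- The matching `μ₊ : M↓ → M↑`. -/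
noncomputable def muPlus (σ : Cube) : Cube :=
  if M1down σ then ⟨σ.A.erase σ.alpha, insert σ.alpha σ.B, σ.C, σ.D⟩
  else ⟨σ.A, insert σ.beta σ.B, σ.C.erase σ.beta, σ.D⟩

/-- The free `ℤ/2`-vector space on all (potential) cubes. -/
abbrev Chain := Cube →₀ ZMod 2

/-- The chain `ρ_{A,C}`: the sum of all cubes `(A,B,C,D)` with
`B ∪ D = [n] ∖ (A ∪ C)`, `B ∩ D = ∅`. -/
noncomputable def rho (n : ℕ) (A C : Finset ℕ) : Chain :=
  (Finset.Icc 1 n \ (A ∪ C)).powerset.sum fun B =>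
    Finsupp.single ⟨A, B, C, (Finset.Icc 1 n \ (A ∪ C)) \ B⟩ 1

/-! A cube `(A, B, C, D)` is critical exactly when `A = {a}`, every element of `B` lies strictly
between `a` and `max C`, and either `C` is a singleton or `max C < a`; the pivots are then
`α = a` and `β = max C`. The support of `ρ_{A,C}` consists of the cubes `(A, B, C, S ∖ B)` with
`B ⊆ S`, so each case reduces to deciding which `B` meet this condition; when `max C ≤ a + 1`
only `B = ∅` does. -/

namespace Cube

variable (σ : Cube)

lemma alpha_mem (h : (σ.A ∪ σ.B).Nonempty) : σ.alpha ∈ σ.A ∪ σ.B := by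
  rw [alpha, h.csInf_eq_min']
  exact Finset.min'_mem _ h

lemma alpha_le (h : (σ.A ∪ σ.B).Nonempty) {x : ℕ} (hx : x ∈ σ.A ∪ σ.B) : σ.alpha ≤ x := by
  rw [alpha, h.csInf_eq_min']
  exact Finset.min'_le _ _ hx

lemma beta_mem (h : (σ.B ∪ σ.C).Nonempty) : σ.beta ∈ σ.B ∪ σ.C := by
  rw [beta, h.csSup_eq_max']
  exact Finset.max'_mem _ h

lemma le_beta (h : (σ.B ∪ σ.C).Nonempty) {x : ℕ} (hx : x ∈ σ.B ∪ σ.C) : x ≤ σ.beta := by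
  rw [beta, h.csSup_eq_max']
  exact Finset.le_max' _ _ hx

lemma alpha_eq_min' (hA : σ.A.Nonempty) (h : σ.alpha ∈ σ.A) : σ.alpha = σ.A.min' hA :=
  le_antisymm (σ.alpha_le ⟨_, Finset.mem_union_left _ h⟩
      (Finset.mem_union_left _ (Finset.min'_mem _ hA)))
    (Finset.min'_le _ _ h)

lemma beta_eq_max' (hC : σ.C.Nonempty) (h : σ.beta ∈ σ.C) : σ.beta = σ.C.max' hC :=
  le_antisymm (Finset.le_max' _ _ h)
    (σ.le_beta ⟨_, Finset.mem_union_right _ h⟩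
      (Finset.mem_union_right _ (Finset.max'_mem _ hC)))

lemma alpha_mem_A_iff (hAB : Disjoint σ.A σ.B) (hA : σ.A.Nonempty) :
    σ.alpha ∈ σ.A ↔ ∀ b ∈ σ.B, σ.A.min' hA < b := by
  have hAB' : (σ.A ∪ σ.B).Nonempty := hA.mono Finset.subset_union_left
  constructor
  · intro h b hb
    rw [← σ.alpha_eq_min' hA h]
    exact lt_of_le_of_ne (σ.alpha_le hAB' (Finset.mem_union_right _ hb))
      (Finset.disjoint_left.mp hAB h <| · ▸ hb)
  · intro h
    refine (Finset.mem_union.mp (σ.alpha_mem hAB')).resolve_right fun hB => ?_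
    have := σ.alpha_le hAB' (Finset.mem_union_left _ (Finset.min'_mem _ hA))
    exact (h _ hB).not_ge this

lemma beta_mem_C_iff (hBC : Disjoint σ.B σ.C) (hC : σ.C.Nonempty) :
    σ.beta ∈ σ.C ↔ ∀ b ∈ σ.B, b < σ.C.max' hC := by
  have hBC' : (σ.B ∪ σ.C).Nonempty := hC.mono Finset.subset_union_right
  constructor
  · intro h b hb
    rw [← σ.beta_eq_max' hC h]
    exact lt_of_le_of_ne (σ.le_beta hBC' (Finset.mem_union_left _ hb))
      (Finset.disjoint_left.mp hBC hb <| · ▸ h)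
  · intro h
    refine (Finset.mem_union.mp (σ.beta_mem hBC')).resolve_left fun hB => ?_
    have := σ.le_beta hBC' (Finset.mem_union_right _ (Finset.max'_mem _ hC))
    exact (h _ hB).not_ge this

lemma critical_iff_pivots (hAB : Disjoint σ.A σ.B) (hBC : Disjoint σ.B σ.C)
    (hA : σ.A.Nonempty) (hC : σ.C.Nonempty) :
    Critical σ ↔ σ.A.card ≤ 1 ∧ σ.alpha ∈ σ.A ∧ σ.beta ∈ σ.C ∧
      (σ.C.card ≤ 1 ∨ σ.beta ≤ σ.alpha) := by
  have hA_singleton : σ.alpha ∈ σ.A → σ.A.card ≤ 1 → σ.A = {σ.alpha} := fun hα h1 =>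
    Finset.eq_singleton_iff_unique_mem.mpr ⟨hα, fun x hx => Finset.card_le_one.mp h1 x hx _ hα⟩
  constructor
  · rintro ⟨hdown, hup⟩
    have hα : σ.alpha ∈ σ.A := (Finset.mem_union.mp
      (σ.alpha_mem (hA.mono Finset.subset_union_left))).resolve_right fun h => hup (.inl h)
    have h1 : σ.A.card ≤ 1 := not_lt.mp fun h => hdown (.inl ⟨hα, h⟩)
    have hβ : σ.beta ∈ σ.C := (Finset.mem_union.mp
      (σ.beta_mem (hC.mono Finset.subset_union_right))).resolve_left
        fun h => hup (.inr ⟨hA_singleton hα h1, h⟩)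
    refine ⟨h1, hα, hβ, ?_⟩
    by_contra! h
    exact hdown (.inr ⟨hA_singleton hα h1, hβ, h.1, h.2⟩)
  · rintro ⟨h1, hα, hβ, hC1⟩
    refine ⟨?_, ?_⟩
    · rintro (⟨-, h2⟩ | ⟨-, -, h2, hlt⟩) <;> omega
    · rintro (hB | ⟨-, hB⟩)
      · exact Finset.disjoint_left.mp hAB hα hB
      · exact Finset.disjoint_left.mp hBC hB hβ

lemma critical_iff (hAB : Disjoint σ.A σ.B) (hAC : Disjoint σ.A σ.C)
    (hBC : Disjoint σ.B σ.C) (hA : σ.A.Nonempty) (hC : σ.C.Nonempty) :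
    Critical σ ↔ σ.A.card ≤ 1 ∧ (∀ b ∈ σ.B, σ.A.min' hA < b ∧ b < σ.C.max' hC) ∧
      (σ.C.card ≤ 1 ∨ σ.C.max' hC < σ.A.min' hA) := by
  rw [critical_iff_pivots σ hAB hBC hA hC]
  constructor
  · rintro ⟨h1, hα, hβ, hC1⟩
    have hmin := σ.alpha_eq_min' hA hα
    have hmax := σ.beta_eq_max' hC hβ
    have hne : σ.beta ≠ σ.alpha := fun h => Finset.disjoint_left.mp hAC hα (h ▸ hβ)
    refine ⟨h1, fun b hb => ⟨(σ.alpha_mem_A_iff hAB hA).mp hα b hb,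
      (σ.beta_mem_C_iff hBC hC).mp hβ b hb⟩, ?_⟩
    omega
  · rintro ⟨h1, hB, hC1⟩
    have hα := (σ.alpha_mem_A_iff hAB hA).mpr fun b hb => (hB b hb).1
    have hβ := (σ.beta_mem_C_iff hBC hC).mpr fun b hb => (hB b hb).2
    have hmin := σ.alpha_eq_min' hA hα
    have hmax := σ.beta_eq_max' hC hβ
    exact ⟨h1, hα, hβ, by omega⟩

end Cube

lemma mem_support_rho (n : ℕ) (A C : Finset ℕ) (σ : Cube) :
    σ ∈ (rho n A C).support ↔
      ∃ B ⊆ Finset.Icc 1 n \ (A ∪ C), σ = ⟨A, B, C, (Finset.Icc 1 n \ (A ∪ C)) \ B⟩ := by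
  rw [rho, Finsupp.support_sum_eq_biUnion]
  · simp only [Finset.mem_biUnion, Finset.mem_powerset, Finsupp.support_single _ one_ne_zero,
      Finset.mem_singleton]
  · exact fun B B' hBB' => (Finsupp.support_single_disjoint one_ne_zero one_ne_zero).mpr
      fun h => hBB' (congrArg Cube.B h)

lemma mem_support_rho_and_critical_iff (n : ℕ) {A C : Finset ℕ} (hAC : Disjoint A C)
    (hA : A.Nonempty) (hC : C.Nonempty) (σ : Cube) :
    σ ∈ (rho n A C).support ∧ Critical σ ↔
      ∃ B ⊆ Finset.Icc 1 n \ (A ∪ C),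
        (A.card ≤ 1 ∧ (∀ b ∈ B, A.min' hA < b ∧ b < C.max' hC) ∧
          (C.card ≤ 1 ∨ C.max' hC < A.min' hA)) ∧
        σ = ⟨A, B, C, (Finset.Icc 1 n \ (A ∪ C)) \ B⟩ := by
  have hcrit (B : Finset ℕ) (hBS : B ⊆ Finset.Icc 1 n \ (A ∪ C)) :=
    have hB : Disjoint (A ∪ C) B := Finset.disjoint_sdiff.mono_right hBS
    Cube.critical_iff ⟨A, B, C, (Finset.Icc 1 n \ (A ∪ C)) \ B⟩
      (hB.mono_left Finset.subset_union_left) hAC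
      (hB.symm.mono_right Finset.subset_union_right) hA hC
  rw [mem_support_rho]
  constructor
  · rintro ⟨⟨B, hBS, rfl⟩, h⟩
    exact ⟨B, hBS, (hcrit B hBS).mp h, rfl⟩
  · rintro ⟨B, hBS, h, rfl⟩
    exact ⟨⟨B, hBS, rfl⟩, (hcrit B hBS).mpr h⟩

lemma forall_mem_lt_lt_iff_eq_empty {a m : ℕ} (hm : m ≤ a + 1) {B : Finset ℕ} :
    (∀ b ∈ B, a < b ∧ b < m) ↔ B = ∅ := by
  refine ⟨fun h => Finset.eq_empty_of_forall_notMem fun b hb => ?_, by rintro rfl; simp⟩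
  have := h b hb
  omega

theorem rho_critical_support_general (n : ℕ) (A C : Finset ℕ)
    (hdisj : Disjoint A C) (hAne : A.Nonempty) (hCne : C.Nonempty) :
    (2 ≤ A.card → ∀ σ ∈ (rho n A C).support, ¬ Critical σ) ∧
    (∀ a : ℕ, A = {a} → 2 ≤ C.card →
      ((¬ ∀ c ∈ C, c < a) → ∀ σ ∈ (rho n A C).support, ¬ Critical σ) ∧
      ((∀ c ∈ C, c < a) → ∀ σ : Cube,
        (σ ∈ (rho n A C).support ∧ Critical σ) ↔
          σ = ⟨{a}, ∅, C, Finset.Icc 1 n \ (A ∪ C)⟩)) ∧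
    (∀ a c : ℕ, A = {a} → C = {c} → (c : ℤ) - (a : ℤ) ≤ 1 → ∀ σ : Cube,
      (σ ∈ (rho n A C).support ∧ Critical σ) ↔
        σ = ⟨{a}, ∅, {c}, Finset.Icc 1 n \ (A ∪ C)⟩) ∧
    (∀ a c : ℕ, A = {a} → C = {c} → 2 ≤ (c : ℤ) - (a : ℤ) → ∀ σ : Cube,
      (σ ∈ (rho n A C).support ∧ Critical σ) ↔
        ∃ T ⊆ Finset.Icc 1 n \ (A ∪ C),
          (T = ∅ ∨ ∀ t ∈ T, a < t ∧ t < c) ∧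
          σ = ⟨{a}, T, {c}, (Finset.Icc 1 n \ (A ∪ C)) \ T⟩) := by
  have key := mem_support_rho_and_critical_iff n hdisj hAne hCne
  refine ⟨?_, ?_, ?_, ?_⟩
  · intro h2 σ hσ hcrit
    obtain ⟨-, -, ⟨h1, -⟩, -⟩ := (key σ).mp ⟨hσ, hcrit⟩
    omega
  · rintro a rfl hC2
    simp only [Finset.card_singleton, le_refl, true_and, Finset.min'_singleton] at key
    refine ⟨fun hnot σ hσ hcrit => ?_, fun hlt σ => ?_⟩
    · obtain ⟨-, -, ⟨-, hmax⟩, -⟩ := (key σ).mp ⟨hσ, hcrit⟩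
      exact hnot fun c hc => by have := C.le_max' c hc; omega
    · have hmax : C.max' hCne < a := hlt _ (C.max'_mem hCne)
      rw [key]
      simp [hmax, forall_mem_lt_lt_iff_eq_empty (hmax.le.trans a.le_succ)]
  · rintro a c rfl rfl hca σ
    simp only [Finset.card_singleton, le_refl, true_and, true_or, and_true,
      Finset.min'_singleton, Finset.max'_singleton] at key
    rw [key]
    simp [forall_mem_lt_lt_iff_eq_empty (m := c) (a := a) (by omega)]
  · rintro a c rfl rfl - σ
    simp only [Finset.card_singleton, le_refl, true_and, true_or, and_true,
      Finset.min'_singleton, Finset.max'_singleton] at key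
    have hT (T : Finset ℕ) : (T = ∅ ∨ ∀ t ∈ T, a < t ∧ t < c) ↔ ∀ t ∈ T, a < t ∧ t < c :=
      or_iff_right_of_imp fun h => by simp [h]
    simp only [key, hT]

/-- Description of the critical cubes in the support of `ρ_{A,C}`, where
`S = [n] ∖ (A ∪ C)`:
(1) if `|A| ≥ 2` there are none;
(2) if `A = {a}` and `|C| ≥ 2`, there are none unless `a > C`, in which case
    `(a, ∅, C, S)` is the unique one;
(3) if `A = {a}`, `C = {c}` and `c − a ≤ 1`, `(a, ∅, {c}, S)` is the unique one;
(4) if `A = {a}`, `C = {c}` and `c − a ≥ 2`, they are exactly the cubes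
    `(a, T, {c}, S ∖ T)` with `T ⊆ S` and either `T = ∅` or `a < T < c`. -/
theorem rho_critical_support (n : ℕ) (hn : 2 ≤ n) (A C : Finset ℕ)
    (hA : A ⊆ Finset.Icc 1 n) (hC : C ⊆ Finset.Icc 1 n)
    (hdisj : Disjoint A C) (hAne : A.Nonempty) (hCne : C.Nonempty) :
    (2 ≤ A.card → ∀ σ ∈ (rho n A C).support, ¬ Critical σ) ∧
    (∀ a : ℕ, A = {a} → 2 ≤ C.card →
      ((¬ ∀ c ∈ C, c < a) → ∀ σ ∈ (rho n A C).support, ¬ Critical σ) ∧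
      ((∀ c ∈ C, c < a) → ∀ σ : Cube,
        (σ ∈ (rho n A C).support ∧ Critical σ) ↔
          σ = ⟨{a}, ∅, C, Finset.Icc 1 n \ (A ∪ C)⟩)) ∧
    (∀ a c : ℕ, A = {a} → C = {c} → (c : ℤ) - (a : ℤ) ≤ 1 → ∀ σ : Cube,
      (σ ∈ (rho n A C).support ∧ Critical σ) ↔
        σ = ⟨{a}, ∅, {c}, Finset.Icc 1 n \ (A ∪ C)⟩) ∧
    (∀ a c : ℕ, A = {a} → C = {c} → 2 ≤ (c : ℤ) - (a : ℤ) → ∀ σ : Cube,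
      (σ ∈ (rho n A C).support ∧ Critical σ) ↔
        ∃ T ⊆ Finset.Icc 1 n \ (A ∪ C),
          (T = ∅ ∨ ∀ t ∈ T, a < t ∧ t < c) ∧
          σ = ⟨{a}, T, {c}, (Finset.Icc 1 n \ (A ∪ C)) \ T⟩) :=
  rho_critical_support_general n A C hdisj hAne hCne
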